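/- arXiv:2101.08866 — 5 statements merged into one kernel-verified Lean document; each statement's English description precedes it below -/
import Mathlib

section
/- Every singular n×n matrix over a field is row equivalent to a nilpotent matrix. -/
/-!
For a singular endomorphism `f`, let `W` be a complement of `ker f ≠ 0` and list a basis of `W`
followed by one of `ker f` as `b₀, …, b_{n-1}`, so that `bᵢ ∈ W` exactly for `i < r := dim W`,
and `r < n`. Since `f` is injective on `W`, both `f b₀, …, f b_{r-1}` and `b₁, …, b_r` are
linearly independent, so some automorphism `e` sends the first family to the second. Then
`e ∘ f` maps `bᵢ ↦ bᵢ₊₁` for `i < r` and kills the remaining `bᵢ`, hence is nilpotent.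
For a matrix `M`, `P` is the matrix of `e`.
-/

open Module Submodule

theorem Module.End.isNilpotent_of_mem_span_Ioi {R M : Type*} [Semiring R] [AddCommMonoid M]
    [Module R M] {n : ℕ} (b : Basis (Fin n) R M) (g : Module.End R M)
    (hg : ∀ i, g (b i) ∈ span R (b '' Set.Ioi i)) : IsNilpotent g := by
  let U : ℕ → Submodule R M := fun k => span R (b '' {j | k ≤ j.val})
  have hstep : ∀ k, (U k).map g ≤ U (k + 1) := by
    intro k
    rw [map_span_le]
    rintro _ ⟨j, hj, rfl⟩
    exact span_mono (Set.image_mono fun l hl => Nat.succ_le_of_lt (hj.trans_lt hl)) (hg j)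
  have hpow : ∀ k, (⊤ : Submodule R M).map (g ^ k) ≤ U k := by
    intro k
    induction k with
    | zero => simp [U, b.span_eq]
    | succ k ih =>
      rw [pow_succ', Module.End.mul_eq_comp, map_comp]
      exact (map_mono ih).trans (hstep k)
  refine ⟨n, LinearMap.range_eq_bot.mp (eq_bot_iff.mpr ?_)⟩
  rw [LinearMap.range_eq_map]
  exact (hpow n).trans (by simp [U])

section DivisionRing

variable {K V : Type*} [DivisionRing K] [AddCommGroup V] [Module K V]

theorem Module.Basis.sumExtend_inl {ι : Type*} {v : ι → V} (hv : LinearIndependent K v)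
    (i : ι) : Basis.sumExtend hv (Sum.inl i) = v i := by
  rw [Basis.sumExtend, Basis.coe_reindex, Basis.coe_extend]
  rfl

theorem LinearIndependent.exists_linearEquiv_apply_eq [FiniteDimensional K V] {ι : Type*}
    [Finite ι] {v w : ι → V} (hv : LinearIndependent K v) (hw : LinearIndependent K w) :
    ∃ e : V ≃ₗ[K] V, ∀ i, e (v i) = w i := by
  let bv := Basis.sumExtend hv
  let bw := Basis.sumExtend hw
  have : Finite (Basis.sumExtendIndex hv) := (Module.Finite.finite_basis bv).sum_right ι
  have : Finite (Basis.sumExtendIndex hw) := (Module.Finite.finite_basis bw).sum_right ι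
  have hcard :
      Nat.card (ι ⊕ Basis.sumExtendIndex hv) = Nat.card (ι ⊕ Basis.sumExtendIndex hw) := by
    rw [← finrank_eq_nat_card_basis bv, ← finrank_eq_nat_card_basis bw]
  rw [Nat.card_sum, Nat.card_sum, Nat.add_left_cancel_iff] at hcard
  obtain ⟨σ⟩ := Finite.card_eq.mp hcard
  refine ⟨bv.equiv bw (Equiv.sumCongr (Equiv.refl ι) σ), fun i => ?_⟩
  rw [← Basis.sumExtend_inl hv, Basis.equiv_apply, Equiv.sumCongr_apply, Sum.map_inl,
    Equiv.refl_apply, Basis.sumExtend_inl]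

theorem Submodule.exists_basis_castAdd_natAdd_of_isCompl [FiniteDimensional K V]
    {p q : Submodule K V} (h : IsCompl p q) :
    ∃ b : Basis (Fin (finrank K p + finrank K q)) K V,
      (∀ i, b (Fin.castAdd _ i) ∈ p) ∧ ∀ k, b (Fin.natAdd _ k) ∈ q :=
  ⟨(((finBasis K p).prod (finBasis K q)).map (prodEquivOfIsCompl _ _ h)).reindex finSumFinEquiv,
    fun i => by simp, fun k => by simp⟩

theorem Module.End.exists_isUnit_isNilpotent_mul [FiniteDimensional K V] (f : Module.End K V)
    (hf : ¬IsUnit f) : ∃ u : Module.End K V, IsUnit u ∧ IsNilpotent (u * f) := by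
  obtain ⟨W, hW⟩ := (LinearMap.ker f).exists_isCompl
  obtain ⟨b, hbW, hbK⟩ := exists_basis_castAdd_natAdd_of_isCompl hW.symm
  have hK : 0 < finrank K (LinearMap.ker f) := Nat.pos_of_ne_zero <|
    mt finrank_eq_zero.mp <| mt (LinearMap.isUnit_iff_ker_eq_bot f).mpr hf
  have hv : LinearIndependent K (fun i => f (b (Fin.castAdd _ i))) :=
    (b.linearIndependent.comp _ (Fin.castAdd_injective _ _)).map <|
      hW.symm.disjoint.mono_left <| span_le.mpr <| Set.range_subset_iff.mpr hbW
  have hw : LinearIndependent K (fun i : Fin (finrank K W) => b ⟨i + 1, by omega⟩) :=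
    b.linearIndependent.comp _ fun i j hij => by simpa [Fin.ext_iff] using hij
  obtain ⟨e, he⟩ := hv.exists_linearEquiv_apply_eq hw
  refine ⟨e.toLinearMap, (Module.End.isUnit_iff _).mpr e.bijective, ?_⟩
  refine isNilpotent_of_mem_span_Ioi b _ (Fin.addCases (fun i => ?_) fun k => ?_)
  · rw [Module.End.mul_apply, LinearEquiv.coe_coe, he i]
    exact subset_span ⟨_, by simp [Fin.lt_def], rfl⟩
  · rw [Module.End.mul_apply, LinearMap.mem_ker.mp (hbK k), map_zero]
    exact zero_mem _

end DivisionRing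

theorem singular_row_equiv_nilpotent {F : Type*} [Field F] {n : ℕ}
    (M : Matrix (Fin n) (Fin n) F) (hM : ¬ IsUnit M) :
    ∃ (P N : Matrix (Fin n) (Fin n) F), IsUnit P ∧ IsNilpotent N ∧ N = P * M := by
  let φ : Matrix (Fin n) (Fin n) F ≃ₐ[F] Module.End F (Fin n → F) := Matrix.toLinAlgEquiv'
  have hf : ¬IsUnit (φ M) := fun h => hM (by simpa using h.map φ.symm)
  obtain ⟨u, hu, hnil⟩ := Module.End.exists_isUnit_isNilpotent_mul (φ M) hf
  refine ⟨φ.symm u, φ.symm (u * φ M), hu.map φ.symm, hnil.map φ.symm, ?_⟩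
  rw [map_mul, AlgEquiv.symm_apply_apply]
end

section
/- If two m×n matrices over a field have the same (right) null space, then they are row equivalent. -/
/-! Both ranges are isomorphic to the quotient by the common kernel, and this isomorphism of
ranges extends (across complements of equal dimension) to an automorphism `e` of the target with
`g = e ∘ f`; the matrix of `e` is the invertible `P`. -/

theorem LinearMap.exists_linearEquiv_comp_eq_of_ker_eq {K V W : Type*} [DivisionRing K]
    [AddCommGroup V] [Module K V] [AddCommGroup W] [Module K W] {f g : V →ₗ[K] W}
    [FiniteDimensional K (range f)] (h : ker f = ker g) :
    ∃ e : W ≃ₗ[K] W, g = e.toLinearMap ∘ₗ f := by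
  let e₀ : range f ≃ₗ[K] range g :=
    f.quotKerEquivRange.symm ≪≫ₗ Submodule.quotEquivOfEq _ _ h ≪≫ₗ g.quotKerEquivRange
  obtain ⟨e, he⟩ := Submodule.exists_linearEquiv_restrict_eq e₀
  refine ⟨e, LinearMap.ext fun x => ?_⟩
  simpa [e₀] using he ⟨f x, mem_range_self f x⟩

theorem Matrix.exists_isUnit_mul_eq_of_ker_mulVecLin_eq {F m n : Type*} [Field F]
    [Fintype m] [DecidableEq m] [Fintype n] {A B : Matrix m n F}
    (h : LinearMap.ker A.mulVecLin = LinearMap.ker B.mulVecLin) :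
    ∃ P : Matrix m m F, IsUnit P ∧ B = P * A := by
  obtain ⟨e, he⟩ := LinearMap.exists_linearEquiv_comp_eq_of_ker_eq h
  refine ⟨LinearMap.toMatrix' e.toLinearMap,
    LinearMap.isUnit_toMatrix'_iff.mpr ((Module.End.isUnit_iff _).mpr e.bijective), ?_⟩
  refine ext_iff_mulVec.mpr fun v => ?_
  rw [← mulVec_mulVec, LinearMap.toMatrix'_mulVec, ← mulVecLin_apply, he]
  rfl

theorem same_null_space_row_equiv {F : Type*} [Field F] {m n : ℕ}
    (A B : Matrix (Fin m) (Fin n) F)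
    (h : ∀ v : Fin n → F, A.mulVec v = 0 ↔ B.mulVec v = 0) :
    ∃ P : Matrix (Fin m) (Fin m) F, IsUnit P ∧ B = P * A :=
  Matrix.exists_isUnit_mul_eq_of_ker_mulVecLin_eq (Submodule.ext h)
end

section
/- For scalars a ≠ 0 and b in a field, the nilpotent matrix M with rows (-1, 0, -a), (-b/a, 0, -b), (-(b-1)/a, 1, 1) is row equivalent to the RREF matrix T with rows (1, 0, a), (0, 1, b), (0, 0, 0). -/
/-!
Right multiplication by `T = !![1, 0, a; 0, 1, b; 0, 0, 0]` keeps the first two columns of `P`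
and replaces the third by `a • col₀ + b • col₁`. The third column of `M` is exactly
`a • col₀ + b • col₁` of `M` (here `a ≠ 0` cancels the denominators), so any `P` whose first two
columns are those of `M` works; completing them by the unit vector `e₂` gives `det P = 1`.
-/

theorem Matrix.mul_rref_two_pivots {R : Type*} [CommRing R] (P : Matrix (Fin 3) (Fin 3) R)
    (a b : R) :
    P * !![1, 0, a; 0, 1, b; 0, 0, 0] =
      Matrix.of fun i => ![P i 0, P i 1, a * P i 0 + b * P i 1] := by
  ext i j
  fin_cases j <;> simp [Matrix.mul_apply, Fin.sum_univ_succ, mul_comm]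

theorem nilpotent_row_equiv_rref {F : Type*} [Field F] (a b : F) (ha : a ≠ 0) :
    ∃ P : Matrix (Fin 3) (Fin 3) F, IsUnit P ∧
      (!![-1, 0, -a; -b/a, 0, -b; -(b-1)/a, 1, 1] : Matrix (Fin 3) (Fin 3) F) =
        P * (!![1, 0, a; 0, 1, b; 0, 0, 0] : Matrix (Fin 3) (Fin 3) F) := by
  refine ⟨!![-1, 0, 0; -b/a, 0, 1; -(b-1)/a, 1, 0], ?_, ?_⟩
  · have hdet : (!![-1, 0, 0; -b/a, 0, 1; -(b-1)/a, 1, 0] : Matrix (Fin 3) (Fin 3) F).det = 1 := by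
      simp [Matrix.det_fin_three]
    rw [Matrix.isUnit_iff_isUnit_det, hdet]
    exact isUnit_one
  · rw [Matrix.mul_rref_two_pivots]
    ext i j
    fin_cases i <;> fin_cases j <;> simp [mul_div_cancel₀ _ ha]
end

section
/- For every subspace W of F^n over a field F with dim W ≥ 1, there exists a nilpotent n×n matrix N whose null space equals W. -/
/-!
Choose a linear automorphism of `F^n` carrying `W` onto the span of the first `k = dim W`
standard basis vectors, and conjugate by it the truncated shift `e_j ↦ e_{j-1}` (`j ≥ k`),
`e_j ↦ 0` (`j < k`). The shift is nilpotent, and because `k ≥ 1` the vectors `e_{j-1}` it hits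
are distinct, so its kernel is exactly the span of `e_0, …, e_{k-1}`.
-/

open Module LinearMap

theorem Submodule.exists_linearEquiv_map_eq {K V V' : Type*} [DivisionRing K]
    [AddCommGroup V] [Module K V] [FiniteDimensional K V]
    [AddCommGroup V'] [Module K V'] [FiniteDimensional K V']
    (hV : finrank K V = finrank K V') {W : Submodule K V} {W' : Submodule K V'}
    (hW : finrank K W = finrank K W') : ∃ e : V ≃ₗ[K] V', W.map (e : V →ₗ[K] V') = W' := by
  obtain ⟨U, hU⟩ := W.exists_isCompl
  obtain ⟨U', hU'⟩ := W'.exists_isCompl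
  have hUU' : finrank K U = finrank K U' := by
    have := finrank_add_eq_of_isCompl hU
    have := finrank_add_eq_of_isCompl hU'
    omega
  let e : V ≃ₗ[K] V' := (W.prodEquivOfIsCompl U hU).symm ≪≫ₗ
    (LinearEquiv.ofFinrankEq W W' hW).prodCongr (LinearEquiv.ofFinrankEq U U' hUU') ≪≫ₗ
    W'.prodEquivOfIsCompl U' hU'
  refine ⟨e, eq_of_le_of_finrank_eq ?_ (by rwa [LinearEquiv.finrank_map_eq])⟩
  rintro _ ⟨w, hw, rfl⟩
  simp [e, prodEquivOfIsCompl_symm_apply_left W U hU ⟨w, hw⟩]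

theorem LinearEquiv.ker_conj {R M M₂ : Type*} [CommSemiring R] [AddCommMonoid M] [Module R M]
    [AddCommMonoid M₂] [Module R M₂] (e : M ≃ₗ[R] M₂) (f : Module.End R M) :
    ker (e.conj f) = (ker f).map (e : M →ₗ[R] M₂) := by
  rw [conj_apply, LinearMap.ker_comp, LinearEquiv.ker_comp, Submodule.comap_equiv_eq_map_symm,
    symm_symm]

section Shift

variable {R : Type*} [Semiring R]

def shiftFrom (k n : ℕ) : Module.End R (Fin n → R) :=
  LinearMap.pi fun i => if h : (i : ℕ) + 1 < n ∧ k ≤ (i : ℕ) + 1 then proj ⟨i + 1, h.1⟩ else 0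

variable (R) in
def vanishingFrom (k n : ℕ) : Submodule R (Fin n → R) :=
  ⨅ j ∈ {j : Fin n | k ≤ (j : ℕ)}, ker (proj j)

variable {k n : ℕ}

theorem shiftFrom_apply (x : Fin n → R) (i : Fin n) :
    shiftFrom k n x i = if h : (i : ℕ) + 1 < n ∧ k ≤ (i : ℕ) + 1 then x ⟨i + 1, h.1⟩ else 0 := by
  simp only [shiftFrom, pi_apply]
  split_ifs <;> rfl

theorem shiftFrom_pow_apply_eq_zero {t : ℕ} (x : Fin n → R) (i : Fin n) (h : n ≤ i + t) :
    (shiftFrom k n ^ t) x i = 0 := by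
  induction t generalizing i with
  | zero => omega
  | succ t ih =>
    rw [pow_succ', Module.End.mul_apply, shiftFrom_apply]
    split_ifs with hi
    · exact ih _ (by simp only; omega)
    · rfl

theorem isNilpotent_shiftFrom : IsNilpotent (shiftFrom (R := R) k n) :=
  ⟨n, LinearMap.ext fun x => funext fun i => shiftFrom_pow_apply_eq_zero x i (by omega)⟩

theorem mem_vanishingFrom {x : Fin n → R} :
    x ∈ vanishingFrom R k n ↔ ∀ j : Fin n, k ≤ j → x j = 0 := by
  simp [vanishingFrom, Submodule.mem_iInf]

theorem ker_shiftFrom (hk : 1 ≤ k) : ker (shiftFrom k n) = vanishingFrom R k n := by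
  ext x
  simp only [mem_ker, mem_vanishingFrom, funext_iff, shiftFrom_apply, Pi.zero_apply]
  constructor
  · rintro hx ⟨_ | j, hj⟩ hkj
    · simp only at hkj; omega
    · simpa [hj, hkj] using hx ⟨j, by omega⟩
  · intro hx i
    split_ifs with hi
    exacts [hx _ hi.2, rfl]

theorem finrank_vanishingFrom [StrongRankCondition R] (hk : k ≤ n) :
    finrank R (vanishingFrom R k n) = k := by
  rw [vanishingFrom,
    (iInfKerProjEquiv R (fun _ => R) (I := {j : Fin n | (j : ℕ) < k}) ?_ ?_).finrank_eq,
    finrank_fintype_fun_eq_card]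
  · exact Fintype.card_fin_lt_of_le hk
  · exact Set.disjoint_left.mpr fun j (h₁ : (j : ℕ) < k) (h₂ : k ≤ (j : ℕ)) => by omega
  · intro j _
    exact lt_or_ge (j : ℕ) k

end Shift

theorem Module.End.exists_isNilpotent_ker_eq {F V : Type*} [Field F] [AddCommGroup V]
    [Module F V] [FiniteDimensional F V] (W : Submodule F V) (hW : W ≠ ⊥) :
    ∃ f : Module.End F V, IsNilpotent f ∧ ker f = W := by
  obtain ⟨e, he⟩ := W.exists_linearEquiv_map_eq (finrank_fin_fun F).symm
    (finrank_vanishingFrom W.finrank_le).symm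
  refine ⟨e.symm.conj (shiftFrom (finrank F W) _),
    isNilpotent_shiftFrom.map (e.symm.conjAlgEquiv F), ?_⟩
  rw [LinearEquiv.ker_conj, ker_shiftFrom (Submodule.one_le_finrank_iff.mpr hW)]
  exact (Submodule.map_symm_eq_iff e).mpr he

theorem exists_nilpotent_with_null_space {F : Type*} [Field F] {n : ℕ}
    (W : Submodule F (Fin n → F)) (hW : 1 ≤ Module.finrank F W) :
    ∃ N : Matrix (Fin n) (Fin n) F, IsNilpotent N ∧ LinearMap.ker N.mulVecLin = W := by
  obtain ⟨f, hf, hker⟩ :=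
    Module.End.exists_isNilpotent_ker_eq W (Submodule.one_le_finrank_iff.mp hW)
  refine ⟨toMatrix' f, hf.map toMatrixAlgEquiv', ?_⟩
  rw [← Matrix.toLin'_apply', Matrix.toLin'_toMatrix', hker]
end

section
/- If an n×n matrix N over a field is nilpotent with null space of dimension ℓ, then N^{n-ℓ+1} = 0. -/
/-!
For nilpotent `f` the kernels of the powers `f ^ k` grow strictly until they fill the whole
space: once two consecutive kernels agree the chain is constant, yet some power is `0`.
Hence a nonzero `f ^ (k + 1)` has a kernel of dimension at least `ℓ + k`, and a nonzero
`f ^ (n - ℓ + 1)` would have a proper kernel of dimension `n`.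
-/

open LinearMap Module

namespace Module.End

variable {K V : Type*} [DivisionRing K] [AddCommGroup V] [Module K V]

theorem ker_pow_lt_ker_pow_succ_of_isNilpotent {f : End K V} (hf : IsNilpotent f) {k : ℕ}
    (hk : f ^ k ≠ 0) : ker (f ^ k) < ker (f ^ (k + 1)) := by
  refine lt_of_le_of_ne (pow_succ' f k ▸ ker_le_ker_comp _ _) fun heq ↦ hk ?_
  obtain ⟨m, hm⟩ := hf
  rw [← ker_eq_top, ker_pow_constant heq m, pow_add, hm, mul_zero, ker_zero]

theorem finrank_ker_add_le_finrank_ker_pow_succ [FiniteDimensional K V] {f : End K V}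
    (hf : IsNilpotent f) {k : ℕ} (hk : f ^ (k + 1) ≠ 0) :
    finrank K (ker f) + k ≤ finrank K (ker (f ^ (k + 1))) := by
  induction k with
  | zero => rw [zero_add, pow_one, add_zero]
  | succ k ih =>
    have hk' : f ^ (k + 1) ≠ 0 := fun h ↦ hk (by rw [pow_succ, h, zero_mul])
    have hstep := Submodule.finrank_lt_finrank_of_lt (ker_pow_lt_ker_pow_succ_of_isNilpotent hf hk')
    have hprev := ih hk'
    omega

theorem _root_.IsNilpotent.pow_finrank_sub_finrank_ker_add_one_eq_zero [FiniteDimensional K V]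
    {f : End K V} (hf : IsNilpotent f) :
    f ^ (finrank K V - finrank K (ker f) + 1) = 0 := by
  by_contra hne
  have hlow := finrank_ker_add_le_finrank_ker_pow_succ hf hne
  have hup := Submodule.finrank_lt (mt ker_eq_top.mp hne)
  have hker := (ker f).finrank_le
  omega

end Module.End

theorem nilpotent_index_le_of_nullity {F : Type*} [Field F] {n ℓ : ℕ}
    (N : Matrix (Fin n) (Fin n) F) (hN : IsNilpotent N)
    (hℓ : ℓ = Module.finrank F (LinearMap.ker N.mulVecLin)) :
    N ^ (n - ℓ + 1) = 0 := by
  subst hℓ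
  have h := (hN.map (Matrix.toLinAlgEquiv' (R := F))).pow_finrank_sub_finrank_ker_add_one_eq_zero
  rw [finrank_fin_fun, ← map_pow] at h
  exact (Matrix.toLinAlgEquiv' (R := F)).map_eq_zero_iff.mp h
end
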